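/- The gradient of the per-example clustering loss L_i = Σ_j p_{ij} log(p_{ij}/q_{ij}) with respect to the embedded point z_i equals 2 Σ_j (1+||z_i-μ_j||²)^{-1} (p_{ij} - q_{ij})(z_i - μ_j), where q_{ij} is the Student's t soft assignment. -/

import Mathlib

/-!
With `w_j(x) = (1 + ‖x - μ_j‖²)⁻¹` and `q_j = w_j / ∑ w`, the normalisation `∑ p_j = 1` turns the
loss into `∑ p_j log p_j - ∑ p_j log w_j(x) + log ∑_j w_j(x)`. Since `∇ w_j = -2 w_j² (x - μ_j)`,
the middle term contributes `2 ∑ p_j w_j (x - μ_j)` and the log-partition term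
`-2 ∑ w_j q_j (x - μ_j)`.
-/

noncomputable def studentQ {d K : ℕ} (μ : Fin K → EuclideanSpace ℝ (Fin d))
    (z : EuclideanSpace ℝ (Fin d)) (j : Fin K) : ℝ :=
  (1 + ‖z - μ j‖ ^ 2)⁻¹ / ∑ j' : Fin K, (1 + ‖z - μ j'‖ ^ 2)⁻¹

open Real Finset

theorem sum_mul_log_div_div_sum {ι : Type*} [Fintype ι] {p w : ι → ℝ} (hp : ∑ j, p j = 1)
    (hw : ∀ j, w j ≠ 0) (hS : ∑ j, w j ≠ 0) :
    ∑ j, p j * log (p j / (w j / ∑ j', w j')) =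
      ∑ j, p j * log (p j) - ∑ j, p j * log (w j) + log (∑ j, w j) := by
  have hterm : ∀ j, p j * log (p j / (w j / ∑ j', w j')) =
      p j * log (p j) - p j * log (w j) + p j * log (∑ j', w j') := by
    intro j
    rcases eq_or_ne (p j) 0 with hpj | hpj
    · simp [hpj]
    · rw [log_div hpj (div_ne_zero (hw j) hS), log_div (hw j) hS]
      ring
  rw [sum_congr rfl fun j _ => hterm j, sum_add_distrib, sum_sub_distrib, ← sum_mul, hp, one_mul]

section StudentKernel

variable {E : Type*} [SeminormedAddCommGroup E]

noncomputable def studentKernel (c x : E) : ℝ := (1 + ‖x - c‖ ^ 2)⁻¹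

theorem studentKernel_pos (c x : E) : 0 < studentKernel c x := by
  unfold studentKernel
  positivity

end StudentKernel

section StudentKernelDeriv

variable {E : Type*} [NormedAddCommGroup E] [InnerProductSpace ℝ E]

theorem hasFDerivAt_studentKernel (c z : E) :
    HasFDerivAt (studentKernel c) (innerSL ℝ ((-2 * studentKernel c z ^ 2) • (z - c))) z := by
  have hsq : HasFDerivAt (fun x => 1 + ‖x - c‖ ^ 2) (2 • innerSL ℝ (z - c)) z := by
    simpa using (((hasFDerivAt_id z).sub_const c).norm_sq).const_add 1
  refine ((hasDerivAt_inv (by positivity : 1 + ‖z - c‖ ^ 2 ≠ 0)).comp_hasFDerivAt z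
    hsq).congr_fderiv ?_
  ext v
  simp only [studentKernel, map_sub, map_neg, map_smul, neg_smul, neg_apply, smul_apply, sub_apply,
    coe_innerSL_apply, nsmul_eq_mul, Nat.cast_ofNat, smul_eq_mul, inv_pow, neg_mul, neg_inj]
  ring

theorem hasFDerivAt_log_studentKernel (c z : E) :
    HasFDerivAt (fun x => log (studentKernel c x))
      (innerSL ℝ ((-2 * studentKernel c z) • (z - c))) z := by
  convert (hasFDerivAt_studentKernel c z).log (studentKernel_pos c z).ne' using 1
  rw [← map_smul, smul_smul]
  congr 2
  field_simp [(studentKernel_pos c z).ne']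

theorem hasFDerivAt_log_sum_studentKernel {ι : Type*} [Fintype ι] [Nonempty ι] (μ : ι → E)
    (z : E) :
    HasFDerivAt (fun x => log (∑ j, studentKernel (μ j) x))
      (innerSL ℝ ((-2 : ℝ) • ∑ j, (studentKernel (μ j) z *
        (studentKernel (μ j) z / ∑ j', studentKernel (μ j') z)) • (z - μ j))) z := by
  have hS : ∑ j, studentKernel (μ j) z ≠ 0 :=
    (sum_pos (fun j _ => studentKernel_pos (μ j) z) univ_nonempty).ne'
  convert (HasFDerivAt.fun_sum fun j _ => hasFDerivAt_studentKernel (μ j) z).log hS using 1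
  rw [← map_sum, ← map_smul, smul_sum, smul_sum]
  congr 1
  refine sum_congr rfl fun j _ => ?_
  rw [smul_smul, smul_smul]
  congr 1
  field_simp

end StudentKernelDeriv

theorem gradient_clustering_loss_wrt_z_general (d K : ℕ)
    (μ : Fin K → EuclideanSpace ℝ (Fin d))
    (p : Fin K → ℝ) (hpsum : ∑ j, p j = 1)
    (z : EuclideanSpace ℝ (Fin d)) :
    HasGradientAt
      (fun x : EuclideanSpace ℝ (Fin d) =>
        ∑ j, p j * Real.log (p j / studentQ μ x j))
      (2 • ∑ j, ((1 + ‖z - μ j‖ ^ 2)⁻¹ * (p j - studentQ μ z j)) • (z - μ j))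
      z := by
  have : Nonempty (Fin K) :=
    univ_nonempty_iff.mp (nonempty_of_sum_ne_zero (hpsum ▸ one_ne_zero))
  have hloss : (fun x => ∑ j, p j * log (p j / studentQ μ x j)) = fun x =>
      ∑ j, p j * log (p j) - ∑ j, p j * log (studentKernel (μ j) x) +
        log (∑ j, studentKernel (μ j) x) := by
    funext x
    exact sum_mul_log_div_div_sum hpsum (fun j => (studentKernel_pos (μ j) x).ne')
      (sum_pos (fun j _ => studentKernel_pos (μ j) x) univ_nonempty).ne'
  rw [hasGradientAt_iff_hasFDerivAt, hloss]
  refine (((hasFDerivAt_const (∑ j, p j * log (p j)) z).sub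
    (HasFDerivAt.fun_sum (u := univ) fun j _ =>
      (hasFDerivAt_log_studentKernel (μ j) z).const_mul (p j))).add
    (hasFDerivAt_log_sum_studentKernel μ z)).congr_fderiv ?_
  change _ = innerSL ℝ (E := EuclideanSpace ℝ (Fin d)) _
  simp only [← map_smul, ← map_sum, zero_sub, ← map_neg, ← map_add]
  congr 1
  simp only [studentQ, studentKernel, smul_sum, ← sum_neg_distrib, ← sum_add_distrib]
  refine sum_congr rfl fun j _ => ?_
  module

theorem gradient_clustering_loss_wrt_z (d K : ℕ)
    (μ : Fin K → EuclideanSpace ℝ (Fin d))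
    (p : Fin K → ℝ) (hp : ∀ j, 0 < p j) (hpsum : ∑ j, p j = 1)
    (z : EuclideanSpace ℝ (Fin d)) :
    HasGradientAt
      (fun x : EuclideanSpace ℝ (Fin d) =>
        ∑ j, p j * Real.log (p j / studentQ μ x j))
      (2 • ∑ j, ((1 + ‖z - μ j‖ ^ 2)⁻¹ * (p j - studentQ μ z j)) • (z - μ j))
      z :=
  gradient_clustering_loss_wrt_z_general d K μ p hpsum z
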